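/- arXiv:0704.2248 — 4 statements merged into one kernel-verified Lean document; each statement's English description precedes it below -/
import Mathlib

section
/- Let A be a finite-dimensional Q-algebra with Jacobson radical J. If the multiplicative group 1 + J contains no subgroup isomorphic to Z × Z, then J² = 0 and the Q-dimension of J is at most 1. -/
/-!
If `J² ≠ 0` or `dim_ℚ J ≥ 2`, pick `x, z ∈ J` with `z ≠ 0`, `J z = 0`, `z x = 0`, and a
`ℚ`-subspace `W ⊇ J²` with `z ∈ W`, `x ∉ W`: when `J² = 0` take `z ≠ 0`, `x ∉ ℚ z`, `W = ℚ z`;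
otherwise take `z ≠ 0` in the last nonzero power of the nilpotent ideal `J`, `x ∈ J \ J²`, `W = J²`.
Then `u = 1 + x` and `v = 1 + z` commute, `v ^ b = 1 + b z`, and `u ^ a ≡ 1 + a x` modulo `J²`, so
`u ^ a v ^ b = 1` forces `a x ∈ W`, hence `a = 0`, and then `b z = 0`, hence `b = 0`.
So `(a, b) ↦ u ^ a v ^ b` embeds `ℤ × ℤ` into `1 + J`.
-/

theorem Commute.exists_subgroup_mulEquiv_int_prod_int {G : Type*} [Group G] {u v : G}
    (hcomm : Commute u v) (hinj : ∀ a b : ℤ, u ^ a * v ^ b = 1 → a = 0 ∧ b = 0) :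
    ∃ H : Subgroup G, (∀ w ∈ H, ∃ a b : ℤ, w = u ^ a * v ^ b) ∧
      Nonempty (H ≃* Multiplicative (ℤ × ℤ)) := by
  let φ : Multiplicative (ℤ × ℤ) →* G :=
    ((zpowersHom G u).noncommCoprod (zpowersHom G v) fun _ _ ↦ hcomm.zpow_zpow _ _).comp
      (MulEquiv.prodMultiplicative ℤ ℤ).toMonoidHom
  have hφ (a b : ℤ) : φ (.ofAdd (a, b)) = u ^ a * v ^ b := rfl
  have hφinj : Function.Injective φ := by
    rw [injective_iff_map_eq_one]
    intro p hp
    obtain ⟨⟨a, b⟩, rfl⟩ := Multiplicative.ofAdd.surjective p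
    obtain ⟨rfl, rfl⟩ := hinj a b hp
    rfl
  refine ⟨φ.range, ?_, ⟨(MonoidHom.ofInjective hφinj).symm⟩⟩
  rintro _ ⟨p, rfl⟩
  obtain ⟨⟨a, b⟩, rfl⟩ := Multiplicative.ofAdd.surjective p
  exact ⟨a, b, hφ a b⟩

section

variable {A : Type*} [Ring A]

theorem one_add_pow_sub_one_sub_nsmul_mem_mul {I : Ideal A} {x : A} (hx : x ∈ I) (n : ℕ) :
    (1 + x) ^ n - 1 - n • x ∈ I * I := by
  induction n with
  | zero => simp
  | succ n ih =>
    have key : (1 + x) ^ (n + 1) - 1 - (n + 1) • x =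
        (1 + x) * ((1 + x) ^ n - 1 - n • x) + n • (x * x) := by
      simp only [pow_succ', succ_nsmul, mul_sub, mul_one, mul_smul_comm, add_mul, one_mul, smul_add]
      abel
    rw [key]
    exact add_mem (Ideal.mul_mem_left _ _ ih) (nsmul_mem (Submodule.mul_mem_mul hx hx) n)

theorem one_add_pow_of_mul_self_eq_zero {t : A} (ht : t * t = 0) (n : ℕ) :
    (1 + t) ^ n = 1 + n • t := by
  induction n with
  | zero => simp
  | succ n ih =>
    rw [pow_succ, ih, add_mul, one_mul, mul_add, mul_one, smul_mul_assoc, ht, smul_zero, add_zero,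
      succ_nsmul]
    abel

theorem Units.val_zpow_sub_one_sub_zsmul_mem_mul {I : Ideal A} {u : Aˣ} {x : A}
    (hu : (u : A) = 1 + x) (hx : x ∈ I) (a : ℤ) :
    ((u ^ a : Aˣ) : A) - 1 - a • x ∈ I * I := by
  obtain ⟨n, rfl | rfl⟩ := Int.eq_nat_or_neg a
  · simpa [hu] using one_add_pow_sub_one_sub_nsmul_mem_mul hx n
  · set y : A := ((u⁻¹ : Aˣ) : A) - 1 with hy_def
    have hy_add : y + x = -(y * x) := by
      have h : (1 + y) * (1 + x) = 1 := by rw [← hu, hy_def, add_sub_cancel, Units.inv_mul]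
      rw [eq_neg_iff_add_eq_zero]
      calc y + x + y * x = (1 + y) * (1 + x) - 1 := by noncomm_ring
        _ = 0 := by rw [h, sub_self]
    have hyI : y ∈ I := by
      have : y = -((u⁻¹ : Aˣ) * x) := by
        rw [hy_def, ← Units.inv_mul u, hu]
        noncomm_ring
      rw [this]
      exact neg_mem (Ideal.mul_mem_left _ _ hx)
    have key : ((u ^ (-(n : ℤ)) : Aˣ) : A) - 1 - (-(n : ℤ)) • x =
        ((1 + y) ^ n - 1 - n • y) + n • (y + x) := by
      rw [zpow_neg, zpow_natCast, ← inv_pow, Units.val_pow_eq_pow_val, hy_def, add_sub_cancel]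
      simp only [smul_add, smul_sub, neg_zsmul, natCast_zsmul]
      abel
    rw [key, hy_add]
    exact add_mem (one_add_pow_sub_one_sub_nsmul_mem_mul hyI n)
      (nsmul_mem (neg_mem (Submodule.mul_mem_mul hyI hx)) n)

theorem Units.val_zpow_of_mul_self_eq_zero {u : Aˣ} {t : A} (hu : (u : A) = 1 + t)
    (ht : t * t = 0) (a : ℤ) : ((u ^ a : Aˣ) : A) = 1 + a • t := by
  have hinv : ((u⁻¹ : Aˣ) : A) = 1 + -t := Units.inv_eq_of_mul_eq_one_right <| by
    rw [hu, mul_add, mul_one, add_mul, one_mul, mul_neg, ht]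
    abel
  obtain ⟨n, rfl | rfl⟩ := Int.eq_nat_or_neg a
  · simp [hu, one_add_pow_of_mul_self_eq_zero ht]
  · rw [zpow_neg, zpow_natCast, ← inv_pow, Units.val_pow_eq_pow_val, hinv,
      one_add_pow_of_mul_self_eq_zero (by rw [neg_mul_neg, ht])]
    simp

theorem Ideal.exists_subgroup_mulEquiv_int_prod_int [Algebra ℚ A] {I : Ideal A}
    (hI : ∀ y ∈ I, IsUnit (1 + y)) {x z : A} (hx : x ∈ I) (hz : z ∈ I) (hz0 : z ≠ 0)
    (hIz : ∀ y ∈ I, y * z = 0) (hzx : z * x = 0) {W : Submodule ℚ A}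
    (hIW : (I * I).restrictScalars ℚ ≤ W) (hzW : z ∈ W) (hxW : x ∉ W) :
    ∃ H : Subgroup Aˣ, (∀ w ∈ H, (w : A) - 1 ∈ I) ∧ Nonempty (H ≃* Multiplicative (ℤ × ℤ)) := by
  obtain ⟨u, hu⟩ := hI x hx
  obtain ⟨v, hv⟩ := hI z hz
  have hcomm : Commute u v := Units.ext <| by
    simp only [Units.val_mul, hu, hv, add_mul, mul_add, one_mul, mul_one, hIz x hx, hzx]
    abel
  have hupow (a : ℤ) : ((u ^ a : Aˣ) : A) - 1 - a • x ∈ I * I :=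
    Units.val_zpow_sub_one_sub_zsmul_mem_mul hu hx a
  have hupow_mem (a : ℤ) : ((u ^ a : Aˣ) : A) - 1 ∈ I := by
    simpa using add_mem (Ideal.mul_le_right (hupow a)) (zsmul_mem hx a)
  have hval (a b : ℤ) : ((u ^ a * v ^ b : Aˣ) : A) - 1 = ((u ^ a : Aˣ) : A) - 1 + b • z := by
    have hz' : ((u ^ a : Aˣ) : A) * z = z := by
      rw [← sub_eq_zero, ← sub_one_mul, hIz _ (hupow_mem a)]
    rw [Units.val_mul, Units.val_zpow_of_mul_self_eq_zero hv (hIz z hz), mul_add, mul_one,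
      mul_smul_comm, hz']
    abel
  obtain ⟨H, hH, hHZ⟩ := hcomm.exists_subgroup_mulEquiv_int_prod_int fun a b hab ↦ by
    have hsum : ((u ^ a : Aˣ) : A) - 1 + b • z = 0 := by
      rw [← hval, hab, Units.val_one, sub_self]
    have ha : a = 0 := by
      by_contra ha
      refine hxW ((W.smul_mem_iff ((Int.cast_ne_zero (α := ℚ)).mpr ha)).mp ?_)
      rw [Int.cast_smul_eq_zsmul]
      have : a • x =
          (((u ^ a : Aˣ) : A) - 1 + b • z) - (((u ^ a : Aˣ) : A) - 1 - a • x) - b • z := by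
        abel
      rw [this, hsum]
      exact W.sub_mem (W.sub_mem W.zero_mem (hIW (hupow a))) (zsmul_mem hzW b)
    refine ⟨ha, ?_⟩
    rw [ha, zpow_zero, Units.val_one, sub_self, zero_add, ← Int.cast_smul_eq_zsmul ℚ] at hsum
    exact_mod_cast (smul_eq_zero.mp hsum).resolve_right hz0
  refine ⟨H, fun w hw ↦ ?_, hHZ⟩
  obtain ⟨a, b, rfl⟩ := hH w hw
  rw [hval]
  exact add_mem (hupow_mem a) (zsmul_mem hz b)

namespace Ideal

variable {I : Ideal A}

theorem IsNilpotent.isNilpotent_of_mem (hI : IsNilpotent I) {x : A} (hx : x ∈ I) :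
    IsNilpotent x := by
  obtain ⟨n, hn⟩ := hI
  exact ⟨n, by simpa [hn] using Ideal.pow_mem_pow hx n⟩

theorem exists_mem_notMem_mul_self (hI : IsNilpotent I) (h : I ≠ ⊥) : ∃ x ∈ I, x ∉ I * I := by
  by_contra! hle
  change I ≤ I * I at hle
  have hpow (n : ℕ) : I ≤ I ^ (n + 1) := by
    induction n with
    | zero => rw [Submodule.pow_one]
    | succ n ih => exact hle.trans (Ideal.mul_mono_left ih)
  obtain ⟨n, hn⟩ := hI
  exact h (le_bot_iff.mp ((hpow n).trans ((Ideal.pow_le_pow_right n.le_succ).trans hn.le)))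

theorem exists_mem_pow_ne_zero_mul_eq_zero [I.IsTwoSided] (hI : IsNilpotent I) {k : ℕ}
    (hk : I ^ k ≠ ⊥) : ∃ z ∈ I ^ k, z ≠ 0 ∧ ∀ y ∈ I, y * z = 0 ∧ z * y = 0 := by
  have hex : ∃ m, I ^ (k + m + 1) = ⊥ := by
    obtain ⟨n, hn⟩ := hI
    exact ⟨n, le_bot_iff.mp ((Ideal.pow_le_pow_right (by omega)).trans hn.le)⟩
  obtain ⟨m, hlast, hmin⟩ : ∃ m, I ^ (k + m + 1) = ⊥ ∧ ∀ m' < m, I ^ (k + m' + 1) ≠ ⊥ :=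
    ⟨Nat.find hex, Nat.find_spec hex, fun _ ↦ Nat.find_min hex⟩
  have hm : I ^ (k + m) ≠ ⊥ := by
    rcases m with _ | m
    · exact hk
    · exact hmin m m.lt_succ_self
  obtain ⟨z, hz, hz0⟩ := Submodule.exists_mem_ne_zero_of_ne_bot hm
  refine ⟨z, Ideal.pow_le_pow_right (by omega) hz, hz0, fun y hy ↦ ⟨?_, ?_⟩⟩
  · have := Ideal.mul_mem_mul hy hz
    rwa [← Ideal.IsTwoSided.pow_succ, hlast, Submodule.mem_bot] at this
  · have := Ideal.mul_mem_mul hz hy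
    rwa [← Submodule.pow_succ, hlast, Submodule.mem_bot] at this

end Ideal

end

theorem Submodule.exists_mem_notMem_span_singleton_of_one_lt_finrank {K V : Type*}
    [DivisionRing K] [AddCommGroup V] [Module K V] {N : Submodule K V}
    (h : 1 < Module.finrank K N) : ∃ z ∈ N, z ≠ 0 ∧ ∃ x ∈ N, x ∉ K ∙ z := by
  have hpos : 0 < Module.finrank K N := zero_lt_one.trans h
  have := Module.finite_of_finrank_pos hpos
  obtain ⟨⟨z, hz⟩, hz0⟩ := Module.finrank_pos_iff_exists_ne_zero.mp hpos
  refine ⟨z, hz, by simpa using hz0, ?_⟩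
  by_contra! hN
  refine h.not_ge (finrank_le_one ⟨z, hz⟩ fun w ↦ ?_)
  obtain ⟨c, hc⟩ := Submodule.mem_span_singleton.mp (hN w w.2)
  exact ⟨c, Subtype.ext hc⟩

/-- If `A` is a finite-dimensional `ℚ`-algebra with Jacobson radical `J`, and the
multiplicative group `1 + J` (viewed inside the unit group) contains no subgroup
isomorphic to `ℤ × ℤ`, then `J² = 0` and `dim_ℚ J ≤ 1`. -/
theorem stmt0 {A : Type*} [Ring A] [Algebra ℚ A] [FiniteDimensional ℚ A]
    (J : Ideal A) (hJ : J = Ideal.jacobson (⊥ : Ideal A))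
    (h : ¬ ∃ H : Subgroup Aˣ, (∀ u ∈ H, ((u : A) - 1) ∈ J) ∧
        Nonempty (H ≃* Multiplicative (ℤ × ℤ))) :
    J * J = ⊥ ∧ Module.finrank ℚ (Submodule.restrictScalars ℚ (J : Submodule A A)) ≤ 1 := by
  have : IsArtinianRing A := .of_finite ℚ A
  have : J.IsTwoSided := hJ ▸ inferInstance
  have hnil : IsNilpotent J := hJ ▸ IsArtinianRing.isNilpotent_jacobson_bot
  have hunit (y : A) (hy : y ∈ J) : IsUnit (1 + y) :=
    (Ideal.IsNilpotent.isNilpotent_of_mem hnil hy).isUnit_one_add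
  by_contra hc
  refine h ?_
  by_cases hJJ : J * J = ⊥
  · have hmul {y y' : A} (hy : y ∈ J) (hy' : y' ∈ J) : y * y' = 0 := by
      simpa [hJJ] using Ideal.mul_mem_mul hy hy'
    obtain ⟨z, hz, hz0, x, hx, hxz⟩ :=
      Submodule.exists_mem_notMem_span_singleton_of_one_lt_finrank (not_le.mp (hc ⟨hJJ, ·⟩))
    exact Ideal.exists_subgroup_mulEquiv_int_prod_int hunit hx hz hz0 (fun y hy ↦ hmul hy hz)
      (hmul hz hx) (by simp [hJJ]) (Submodule.mem_span_singleton_self z) hxz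
  · have hJ2 : J ^ 2 = J * J := by rw [Submodule.pow_succ, Submodule.pow_one]
    obtain ⟨z, hz, hz0, hann⟩ :=
      Ideal.exists_mem_pow_ne_zero_mul_eq_zero hnil (k := 2) (hJ2 ▸ hJJ)
    obtain ⟨x, hx, hxJJ⟩ := Ideal.exists_mem_notMem_mul_self hnil (by rintro rfl; simp at hJJ)
    exact Ideal.exists_subgroup_mulEquiv_int_prod_int hunit hx (Ideal.pow_le_self two_ne_zero hz) hz0
      (fun y hy ↦ (hann y hy).1) (hann x hx).2 le_rfl (hJ2 ▸ hz) hxJJ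
end

section
/- With notation as above, if the unique idempotents E, F with E·j₀ = j₀ and j₀·F = j₀ coincide (E = F), then j₀ is central in A, i.e., x·j₀ = j₀·x for all x ∈ A. -/
/-- In a semisimple ring, every left ideal has an idempotent right identity. -/
lemma exists_right_unit {R : Type*} [Ring R] [IsSemisimpleRing R] (I : Submodule R R) :
    ∃ e ∈ I, ∀ a ∈ I, a * e = a := by
  obtain ⟨J, hJ⟩ := exists_isCompl I
  have h1 : (1 : R) ∈ I ⊔ J := by rw [hJ.sup_eq_top]; trivial
  obtain ⟨e, he, f, hf, hef⟩ := Submodule.mem_sup.mp h1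
  refine ⟨e, he, fun a ha => ?_⟩
  have hIe : a * e ∈ I := by simpa [smul_eq_mul] using I.smul_mem a he
  have h2 : a * f ∈ I := by
    have hsub : a * f = a - a * e := by
      have : a * (e + f) = a * 1 := by rw [hef]
      rw [mul_add, mul_one] at this
      exact eq_sub_of_add_eq' this
    rw [hsub]
    exact sub_mem ha hIe
  have h3 : a * f ∈ J := by simpa [smul_eq_mul] using J.smul_mem a hf
  have h4 : a * f = 0 := by
    have : a * f ∈ I ⊓ J := ⟨h2, h3⟩
    rwa [hJ.inf_eq_bot, Submodule.mem_bot] at this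
  have : a * (e + f) = a * 1 := by rw [hef]
  rw [mul_add, mul_one, h4, add_zero] at this
  exact this

/-- Little noncommutative computation: if `u*e = u` and `(e*u)*e = e*u`
then `(u - e*u)*(c - e*c) = 0`. -/
lemma nil_aux {R : Type*} [Ring R] (e u c : R) (hu : u * e = u) (hv : e * u * e = e * u) :
    (u - e * u) * (c - e * c) = 0 := by
  have h1 : u * (e * c) = u * c := by rw [← mul_assoc, hu]
  have h2 : e * u * (e * c) = e * u * c := by rw [← mul_assoc, hv]
  rw [sub_mul, mul_sub, mul_sub, h1, h2]
  abel

/-- With `A = S(A) ⊕ ℚ·j₀` a Wedderburn–Mal'cev decomposition of a finite-dimensional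
`ℚ`-algebra (the `E i` being the central primitive orthogonal idempotents of the
semisimple complement `S`), if the unique idempotents `E` and `F` with `E·j₀ = j₀`
and `j₀·F = j₀` coincide (say both equal `E m`), then `j₀` is central in `A`. -/
theorem stmt5 {A : Type*} [Ring A] [Algebra ℚ A] [FiniteDimensional ℚ A]
    (j₀ : A) (hj : j₀ ≠ 0) (hsq : j₀ * j₀ = 0)
    (hideal : ∀ a : A, a * j₀ ∈ Submodule.span ℚ ({j₀} : Set A) ∧
        j₀ * a ∈ Submodule.span ℚ ({j₀} : Set A))
    (S : Subalgebra ℚ A) (hss : IsSemisimpleRing S)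
    (hcompl : ∀ a : A, ∃ s ∈ S, ∃ q : ℚ, a = s + q • j₀)
    (hdisj : j₀ ∉ S)
    (N : ℕ) (E : Fin N → A)
    (hES : ∀ i, E i ∈ S)
    (hcent : ∀ i, ∀ s ∈ S, E i * s = s * E i)
    (hidem : ∀ i, E i * E i = E i)
    (horth : ∀ i j, i ≠ j → E i * E j = 0)
    (hsum : ∑ i, E i = 1)
    (hprim : ∀ i, ∀ f ∈ S, (f * f = f ∧ (∀ s ∈ S, f * s = s * f) ∧ f * E i = f) →
        f = 0 ∨ f = E i)
    (m : Fin N) (hmL : E m * j₀ = j₀) (hmR : j₀ * E m = j₀)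
    (hoL : ∀ i, i ≠ m → E i * j₀ = 0) (hoR : ∀ i, i ≠ m → j₀ * E i = 0) :
    ∀ x : A, x * j₀ = j₀ * x := by
  haveI := hss
  -- characters: right/left multiplication by j₀ is a scalar multiple of j₀
  have charL : ∀ a : A, ∃ q : ℚ, a * j₀ = q • j₀ := by
    intro a
    obtain ⟨q, hq⟩ := Submodule.mem_span_singleton.mp (hideal a).1
    exact ⟨q, hq.symm⟩
  have charR : ∀ a : A, ∃ q : ℚ, j₀ * a = q • j₀ := by
    intro a
    obtain ⟨q, hq⟩ := Submodule.mem_span_singleton.mp (hideal a).2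
    exact ⟨q, hq.symm⟩
  -- the left ideal of S annihilating j₀ (on the left)
  set I : Submodule ↥S ↥S :=
    { carrier := {u : ↥S | (u : A) * j₀ = 0}
      add_mem' := by
        intro a b ha hb
        simp only [Set.mem_setOf_eq] at *
        rw [Subalgebra.coe_add, add_mul, ha, hb, add_zero]
      zero_mem' := by simp
      smul_mem' := by
        intro c x hx
        simp only [Set.mem_setOf_eq] at *
        have : ((c • x : ↥S) : A) = (c : A) * (x : A) := rfl
        rw [this, mul_assoc, hx, mul_zero] } with hI
  have memI : ∀ u : ↥S, u ∈ I ↔ (u : A) * j₀ = 0 := fun u => Iff.rfl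
  obtain ⟨e, heI, heR⟩ := exists_right_unit I
  -- I is also a right ideal
  have hIr : ∀ u ∈ I, ∀ x : ↥S, u * x ∈ I := by
    intro u hu x
    obtain ⟨q, hq⟩ := charL (x : A)
    rw [memI] at hu ⊢
    rw [MulMemClass.coe_mul, mul_assoc, hq, mul_smul_comm, hu, smul_zero]
  -- e is left semicentral
  have hsemi : ∀ x : ↥S, e * x * e = e * x := fun x => heR _ (hIr e heI x)
  -- e is central in S
  have ecen : ∀ x : ↥S, x * e = e * x := by
    intro x
    set n : ↥S := x * e - e * (x * e) with hn
    have nrn : ∀ r : ↥S, n * r * n = 0 := by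
      intro r
      have hu : (x * e * r) * e = x * e * r := by
        rw [mul_assoc x e r, mul_assoc x (e * r) e, hsemi r, ← mul_assoc]
      have hv : e * (x * e * r) * e = e * (x * e * r) := by
        rw [mul_assoc, hu]
      have expand : n * r = (x * e * r) - e * (x * e * r) := by
        rw [hn, sub_mul, mul_assoc e (x * e) r]
      rw [expand, hn]
      exact nil_aux e (x * e * r) (x * e) hu hv
    -- the left ideal generated by n squares to zero, hence n = 0
    set L : Submodule ↥S ↥S := Submodule.span ↥S {n} with hL
    obtain ⟨e', he'L, he'R⟩ := exists_right_unit L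
    obtain ⟨r1, hr1⟩ := Submodule.mem_span_singleton.mp he'L
    have he'0 : e' = 0 := by
      have h1 : e' * e' = e' := he'R e' he'L
      have h2 : e' * e' = 0 := by
        rw [← hr1, smul_eq_mul, mul_assoc, ← mul_assoc n r1 n, nrn r1, mul_zero]
      rw [← h1, h2]
    have hn0 : n = 0 := by
      have := he'R n (Submodule.mem_span_singleton_self n)
      rw [he'0, mul_zero] at this
      exact this.symm
    have : x * e = e * (x * e) := by
      have := sub_eq_zero.mp hn0
      exact this
    rw [this, ← mul_assoc, hsemi x]
  -- basic facts about e
  have hej : (e : A) * j₀ = 0 := (memI e).mp heI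
  have heid : (e : A) * (e : A) = (e : A) := by
    simpa using congrArg Subtype.val (heR e heI)
  have ecenA : ∀ s ∈ S, s * (e : A) = (e : A) * s := by
    intro s hs
    simpa using congrArg Subtype.val (ecen ⟨s, hs⟩)
  -- apply primitivity to f = e * E m
  have hEmS := hES m
  have hEme : E m * (e : A) = (e : A) * E m := hcent m _ e.2
  have fS : (e : A) * E m ∈ S := mul_mem e.2 hEmS
  have hf := hprim m ((e : A) * E m) fS ⟨by
      rw [mul_assoc, ← mul_assoc (E m) (e : A) (E m), hEme, mul_assoc, hidem m,
        ← mul_assoc, heid],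
    by
      intro s hs
      rw [mul_assoc, hcent m s hs, ← mul_assoc, ← ecenA s hs, mul_assoc],
    by rw [mul_assoc, hidem m]⟩
  rcases hf with hf0 | hfE
  · -- e * E m = 0 : then j₀ * e = 0 and we can conclude
    have hje : j₀ * (e : A) = 0 := by
      rw [← hmR, mul_assoc, hEme, hf0, mul_zero]
    -- main claim for elements of S
    have key : ∀ s ∈ S, s * j₀ = j₀ * s := by
      intro s hs
      obtain ⟨qa, hqa⟩ := charL s
      obtain ⟨qb, hqb⟩ := charR s
      set t : ↥S := ⟨s, hs⟩ - qa • 1 with ht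
      have htA : (t : A) = s - qa • 1 := rfl
      have htI : t ∈ I := by
        rw [memI, htA, sub_mul, hqa, smul_mul_assoc, one_mul, sub_self]
      have hte : t * e = t := heR t htI
      have hteA : (t : A) * (e : A) = (t : A) := by
        simpa using congrArg Subtype.val hte
      have hjt : j₀ * (t : A) = (qb - qa) • j₀ := by
        rw [htA, mul_sub, hqb, mul_smul_comm, mul_one, sub_smul]
      have hjt0 : j₀ * (t : A) = 0 := by
        rw [← hteA, ← mul_assoc, hjt, smul_mul_assoc, hje, smul_zero]
      have : (qb - qa) • j₀ = 0 := by rw [← hjt, hjt0]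
      have hqq : qb = qa := by
        rcases smul_eq_zero.mp this with h | h
        · linarith [sub_eq_zero.mp (by exact_mod_cast h)]
        · exact absurd h hj
      rw [hqa, hqb, hqq]
    -- conclude for all x
    intro x
    obtain ⟨s, hs, q, hx⟩ := hcompl x
    rw [hx, add_mul, mul_add, key s hs, smul_mul_assoc, hsq, mul_smul_comm, hsq]
  · -- e * E m = E m : contradiction with j₀ ≠ 0
    exfalso
    apply hj
    rw [← hmL, ← hfE, mul_assoc, hmL, hej]
end

section
/- Let S be a finite semigroup, A = Q S its semigroup algebra, and suppose the Jacobson radical of Q S equals Q·j₀ for some j₀ ∈ Q S with j₀² = 0. Then for each s ∈ S there exist λ_s, ρ_s ∈ {−1, 0, 1} such that s·j₀ = λ_s·j₀ and j₀·s = ρ_s·j₀. -/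
/-! Since `ℚ ∙ j₀` is a two-sided ideal, left and right multiplication by `s` act on it by scalars,
and because `j₀ ≠ 0` these scalars are multiplicative in `s`. A multiplicative function on a finite
semigroup `S` takes values whose positive powers form a finite set, and the only rationals with
that property are `-1`, `0` and `1`. -/

open Function

theorem eq_neg_one_or_eq_zero_or_eq_one_of_finite_range_pow_succ {K : Type*} [Field K]
    [LinearOrder K] [IsStrictOrderedRing K] {q : K}
    (h : (Set.range fun n : ℕ => q ^ (n + 1)).Finite) : q = -1 ∨ q = 0 ∨ q = 1 := by
  by_contra! hq
  obtain ⟨hq_neg_one, hq_zero, hq_one⟩ := hq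
  have habs_ne_one : |q| ≠ 1 := fun h =>
    ((abs_eq zero_le_one).mp h).elim hq_one hq_neg_one
  have hinj : Injective fun n : ℕ => q ^ (n + 1) := fun m n hmn => by
    have : |q| ^ (m + 1) = |q| ^ (n + 1) := by simpa only [abs_pow] using congrArg abs hmn
    simpa using pow_right_injective₀ (abs_pos.mpr hq_zero) habs_ne_one this
  exact Set.infinite_range_of_injective hinj h

theorem MulHom.apply_eq_neg_one_or_eq_zero_or_eq_one {S K : Type*} [Mul S] [Finite S] [Field K]
    [LinearOrder K] [IsStrictOrderedRing K] (χ : S →ₙ* K) (s : S) :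
    χ s = -1 ∨ χ s = 0 ∨ χ s = 1 := by
  apply eq_neg_one_or_eq_zero_or_eq_one_of_finite_range_pow_succ
  refine (Set.finite_range χ).subset ?_
  rintro _ ⟨n, rfl⟩
  induction n with
  | zero => exact ⟨s, by simp⟩
  | succ n ih =>
    obtain ⟨x, hx⟩ := ih
    exact ⟨x * s, by simp only [map_mul, hx, pow_succ]⟩

section ScalarAction

variable {S K A : Type*} [Mul S] [Field K] [NonUnitalRing A] [Module K A]

theorem exists_mulHom_map_mul_eq_smul [SMulCommClass K A A] (φ : S →ₙ* A) {j : A} (hj : j ≠ 0)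
    (h : ∀ s, φ s * j ∈ K ∙ j) : ∃ χ : S →ₙ* K, ∀ s, φ s * j = χ s • j := by
  choose c hc using fun s => Submodule.mem_span_singleton.mp (h s)
  refine ⟨⟨c, fun s t => smul_left_injective K hj ?_⟩, fun s => (hc s).symm⟩
  beta_reduce
  rw [hc, map_mul, mul_assoc, ← hc t, mul_smul_comm, ← hc s, smul_smul, mul_comm]

theorem exists_mulHom_mul_map_eq_smul [IsScalarTower K A A] (φ : S →ₙ* A) {j : A} (hj : j ≠ 0)
    (h : ∀ s, j * φ s ∈ K ∙ j) : ∃ χ : S →ₙ* K, ∀ s, j * φ s = χ s • j := by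
  choose c hc using fun s => Submodule.mem_span_singleton.mp (h s)
  refine ⟨⟨c, fun s t => smul_left_injective K hj ?_⟩, fun s => (hc s).symm⟩
  beta_reduce
  rw [hc, map_mul, ← mul_assoc, ← hc s, smul_mul_assoc, ← hc t, smul_smul]

end ScalarAction

theorem stmt7_general {S : Type*} [Semigroup S] [Finite S]
    (j₀ : MonoidAlgebra ℚ S) (hj : j₀ ≠ 0)
    (hideal : ∀ a : MonoidAlgebra ℚ S,
        a * j₀ ∈ Submodule.span ℚ ({j₀} : Set (MonoidAlgebra ℚ S)) ∧
        j₀ * a ∈ Submodule.span ℚ ({j₀} : Set (MonoidAlgebra ℚ S))) :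
    ∀ s : S, ∃ lam rho : ℚ,
      (lam = -1 ∨ lam = 0 ∨ lam = 1) ∧ (rho = -1 ∨ rho = 0 ∨ rho = 1) ∧
      MonoidAlgebra.single s (1 : ℚ) * j₀ = lam • j₀ ∧
      j₀ * MonoidAlgebra.single s (1 : ℚ) = rho • j₀ := by
  obtain ⟨lam, hlam⟩ := exists_mulHom_map_mul_eq_smul (MonoidAlgebra.ofMagma ℚ S) hj
    fun s => (hideal _).1
  obtain ⟨rho, hrho⟩ := exists_mulHom_mul_map_eq_smul (MonoidAlgebra.ofMagma ℚ S) hj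
    fun s => (hideal _).2
  exact fun s => ⟨lam s, rho s, lam.apply_eq_neg_one_or_eq_zero_or_eq_one s,
    rho.apply_eq_neg_one_or_eq_zero_or_eq_one s, hlam s, hrho s⟩

/-- Let `S` be a finite semigroup whose rational semigroup algebra `ℚS` has Jacobson
radical `ℚ·j₀` with `j₀² = 0` (encoded: `ℚ·j₀` is a square-zero two-sided ideal).
Then every `s ∈ S` acts on `j₀` on either side by a scalar in `{-1, 0, 1}`. -/
theorem stmt7 {S : Type*} [Semigroup S] [Finite S]
    (j₀ : MonoidAlgebra ℚ S) (hj : j₀ ≠ 0) (hsq : j₀ * j₀ = 0)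
    (hideal : ∀ a : MonoidAlgebra ℚ S,
        a * j₀ ∈ Submodule.span ℚ ({j₀} : Set (MonoidAlgebra ℚ S)) ∧
        j₀ * a ∈ Submodule.span ℚ ({j₀} : Set (MonoidAlgebra ℚ S))) :
    ∀ s : S, ∃ lam rho : ℚ,
      (lam = -1 ∨ lam = 0 ∨ lam = 1) ∧ (rho = -1 ∨ rho = 0 ∨ rho = 1) ∧
      MonoidAlgebra.single s (1 : ℚ) * j₀ = lam • j₀ ∧
      j₀ * MonoidAlgebra.single s (1 : ℚ) = rho • j₀ :=
  stmt7_general j₀ hj hideal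
end

section
/- The two 5-element semigroups M = M({1}; 2,2; I) and M¹ = M({1}; 2,2; I¹) of 2×2 Rees matrices over the trivial group (with sandwich matrices the identity I and I¹ = e₁₁ + e₁₂ + e₂₂ respectively) are not isomorphic as semigroups, even though both contracted semigroup algebras Q₀M and Q₀M¹ are isomorphic to M₂(Q). -/
/-- The carrier of the two `2 × 2` Rees matrix semigroups over the trivial group:
the four elementary matrices `e₁₁, e₁₂, e₂₁, e₂₂` together with the zero `θ`. -/
inductive RS : Type
  | e11 | e12 | e21 | e22 | th
  deriving DecidableEq

instance : Fintype RS :=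
  ⟨{RS.e11, RS.e12, RS.e21, RS.e22, RS.th}, fun x => by cases x <;> decide⟩

/-- Multiplication of `M = M({1}; 2, 2; I)` (sandwich matrix the identity):
`e_{ij}·e_{kl} = e_{il}` if `j = k`, and `θ` otherwise. -/
def mulM : RS → RS → RS
  | .e11, .e11 => .e11
  | .e11, .e12 => .e12
  | .e12, .e21 => .e11
  | .e12, .e22 => .e12
  | .e21, .e11 => .e21
  | .e21, .e12 => .e22
  | .e22, .e21 => .e21
  | .e22, .e22 => .e22
  | _, _ => .th

/-- Multiplication of `M¹ = M({1}; 2, 2; I¹)` with sandwich matrix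
`I¹ = e₁₁ + e₁₂ + e₂₂`: here `e_{i1}·e_{kl} = e_{il}` for any `k`, and
`e_{i2}·e_{kl} = e_{il}` iff `k = 2`, else `θ`. -/
def mulM1 : RS → RS → RS
  | .e11, .e11 => .e11
  | .e11, .e12 => .e12
  | .e11, .e21 => .e11
  | .e11, .e22 => .e12
  | .e12, .e21 => .e11
  | .e12, .e22 => .e12
  | .e21, .e11 => .e21
  | .e21, .e12 => .e22
  | .e21, .e21 => .e21
  | .e21, .e22 => .e22
  | .e22, .e21 => .e21
  | .e22, .e22 => .e22
  | _, _ => .th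

/-!
`M` has three idempotents (`e₁₁`, `e₂₂`, `θ`) while `M¹` has four (`e₁₁`, `e₂₁`, `e₂₂`, `θ`), and a
multiplicative bijection carries idempotents bijectively onto idempotents, so `M ≇ M¹`. Both
semigroups are represented faithfully in `M₂(ℚ)`: `M` by the matrix units, and `M¹`, whose product
is `A ∘ I¹ ∘ B`, by `x ↦ I¹ x`, because `(I¹A)(I¹B) = I¹(A ∘ I¹ ∘ B)`; the images are still linearly
independent since `I¹` is invertible.
-/

open Matrix

def idempotents {α : Type*} [Fintype α] [DecidableEq α] (mul : α → α → α) : Finset α :=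
  Finset.univ.filter fun a => mul a a = a

theorem card_idempotents_le_of_bijective {α β : Type*} [Fintype α] [DecidableEq α]
    [Fintype β] [DecidableEq β] {mulα : α → α → α} {mulβ : β → β → β} {f : α → β}
    (hf : Function.Bijective f) (hmul : ∀ a b, f (mulα a b) = mulβ (f a) (f b)) :
    (idempotents mulβ).card ≤ (idempotents mulα).card := by
  calc (idempotents mulβ).card ≤ ((idempotents mulα).image f).card := by
        refine Finset.card_le_card fun b hb => ?_
        obtain ⟨a, rfl⟩ := hf.surjective b
        simp only [idempotents, Finset.mem_filter, Finset.mem_univ, true_and,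
          Finset.mem_image] at hb ⊢
        exact ⟨a, hf.injective ((hmul a a).trans hb), rfl⟩
    _ ≤ (idempotents mulα).card := Finset.card_image_le

theorem card_idempotents_mulM : (idempotents mulM).card = 3 := by decide
theorem card_idempotents_mulM1 : (idempotents mulM1).card = 4 := by decide

theorem linearIndependent_mul_left {R A ι : Type*} [CommRing R] [Ring A] [Algebra R A]
    {v : ι → A} (hv : LinearIndependent R v) {P : A} (hP : IsUnit P) :
    LinearIndependent R ((P * ·) ∘ v) :=
  hv.map' (LinearMap.mulLeft R P) (LinearMap.ker_eq_bot.mpr fun _ _ => hP.mul_left_cancel)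

def RS.toMatrix : RS → Matrix (Fin 2) (Fin 2) ℚ
  | .e11 => single 0 0 1
  | .e12 => single 0 1 1
  | .e21 => single 1 0 1
  | .e22 => single 1 1 1
  | .th => 0

def sandwichI1 : Matrix (Fin 2) (Fin 2) ℚ := !![1, 1; 0, 1]

theorem RS.toMatrix_mulM (a b : RS) : (mulM a b).toMatrix = a.toMatrix * b.toMatrix := by
  cases a <;> cases b <;> simp [mulM, RS.toMatrix]

theorem RS.toMatrix_mulM1 (a b : RS) :
    (mulM1 a b).toMatrix = a.toMatrix * sandwichI1 * b.toMatrix := by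
  cases a <;> cases b <;> ext i j <;> fin_cases i <;> fin_cases j <;>
    simp [mulM1, RS.toMatrix, sandwichI1, mul_apply, single_apply]

theorem linearIndependent_toMatrix :
    LinearIndependent ℚ ![RS.e11.toMatrix, RS.e12.toMatrix, RS.e21.toMatrix, RS.e22.toMatrix] := by
  have h := (stdBasis ℚ (Fin 2) (Fin 2)).linearIndependent.comp ![(0, 0), (0, 1), (1, 0), (1, 1)]
    (by decide)
  convert h using 1
  ext i : 1
  fin_cases i <;> simp [RS.toMatrix, stdBasis_eq_single]

theorem isUnit_sandwichI1 : IsUnit sandwichI1 := by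
  simp [isUnit_iff_isUnit_det, sandwichI1, det_fin_two]

/-- The two five-element Rees matrix semigroups `M` and `M¹` are semigroups with
zero `θ`, they are not isomorphic as semigroups, and yet both contracted semigroup
algebras `ℚ₀M` and `ℚ₀M¹` are isomorphic to `M₂(ℚ)` (witnessed by multiplicative
maps into `M₂(ℚ)` killing `θ` whose nonzero values form a basis). -/
theorem stmt19 :
    (∀ a b c : RS, mulM (mulM a b) c = mulM a (mulM b c)) ∧
    (∀ a b c : RS, mulM1 (mulM1 a b) c = mulM1 a (mulM1 b c)) ∧
    (∀ a : RS, mulM RS.th a = RS.th ∧ mulM a RS.th = RS.th) ∧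
    (∀ a : RS, mulM1 RS.th a = RS.th ∧ mulM1 a RS.th = RS.th) ∧
    (¬ ∃ f : RS → RS, Function.Bijective f ∧
        ∀ a b : RS, f (mulM a b) = mulM1 (f a) (f b)) ∧
    (∃ F : RS → Matrix (Fin 2) (Fin 2) ℚ, F RS.th = 0 ∧
        (∀ a b : RS, F (mulM a b) = F a * F b) ∧
        LinearIndependent ℚ ![F RS.e11, F RS.e12, F RS.e21, F RS.e22]) ∧
    (∃ F : RS → Matrix (Fin 2) (Fin 2) ℚ, F RS.th = 0 ∧
        (∀ a b : RS, F (mulM1 a b) = F a * F b) ∧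
        LinearIndependent ℚ ![F RS.e11, F RS.e12, F RS.e21, F RS.e22]) := by
  refine ⟨by decide, by decide, by decide, by decide, ?_,
    ⟨RS.toMatrix, rfl, RS.toMatrix_mulM, linearIndependent_toMatrix⟩,
    ⟨fun x => sandwichI1 * x.toMatrix, mul_zero _, fun a b => ?_, ?_⟩⟩
  · rintro ⟨f, hf, hmul⟩
    have hcard := card_idempotents_le_of_bijective hf hmul
    rw [card_idempotents_mulM, card_idempotents_mulM1] at hcard
    omega
  · simp only [RS.toMatrix_mulM1, mul_assoc]
  · have h := linearIndependent_mul_left linearIndependent_toMatrix isUnit_sandwichI1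
    rw [← FinVec.map_eq] at h
    exact h
end
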